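/- arXiv:1808.01569 — 7 statements merged into one kernel-verified Lean document; each statement's English description precedes it below -/
import Mathlib

section
/- In a transformation semigroup (X,S) with card(S) ≥ 2, the set of proximal pairs equals the union over all proper ideals I on S (I ≠ P(S)) of the sets of pairs asymptotic modulo I: Prox(X,S) = ⋃{Asym_I(X,S) : I an ideal on S with I ≠ P(S)}. -/
/-!
Ideals on `S` are exactly the complements of the members of filters on `S`, a proper ideal
corresponding to a nontrivial filter, and `x, y` are asymptotic modulo `I` iff `s ↦ (s • x, s • y)`
tends to the uniformity along the dual filter. In a compact space, a nontrivial filter along which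
a pair of maps tends to the uniformity can be refined to an ultrafilter along which both maps
converge to a common limit, which is proximality.
-/

/-- An ideal on (the carrier of) a semigroup `S`. -/
def IsIdealOn {S : Type*} (I : Set (Set S)) : Prop :=
  I.Nonempty ∧ (∀ A ∈ I, ∀ B : Set S, B ⊆ A → B ∈ I) ∧ ∀ A ∈ I, ∀ B ∈ I, A ∪ B ∈ I

/-- Asymptoticity modulo an ideal in a transformation semigroup. -/
def AsymMod (S X : Type*) [UniformSpace X] [SMul S X] (I : Set (Set S)) (x y : X) : Prop :=
  ∀ α ∈ uniformity X, {s : S | (s • x, s • y) ∉ α} ∈ I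

/-- Proximality in a transformation semigroup (via a net encoded as a nontrivial filter). -/
def ProxPair (S X : Type*) [TopologicalSpace X] [SMul S X] (x y : X) : Prop :=
  ∃ z : X, ∃ l : Filter S, l.NeBot ∧
    Filter.Tendsto (fun s => s • x) l (nhds z) ∧ Filter.Tendsto (fun s => s • y) l (nhds z)

open Filter Topology Uniformity Set

theorem exists_common_limit_iff_exists_tendsto_uniformity {ι X : Type*} [UniformSpace X]
    [CompactSpace X] {f g : ι → X} :
    (∃ z : X, ∃ l : Filter ι, l.NeBot ∧ Tendsto f l (𝓝 z) ∧ Tendsto g l (𝓝 z)) ↔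
      ∃ l : Filter ι, l.NeBot ∧ Tendsto (fun i => (f i, g i)) l (𝓤 X) := by
  constructor
  · rintro ⟨z, l, hl, hf, hg⟩
    exact ⟨l, hl, (hf.prodMk_nhds hg).mono_right (nhds_le_uniformity z)⟩
  · rintro ⟨l, hl, hfg⟩
    obtain ⟨z, -, hz⟩ := isCompact_univ.ultrafilter_le_nhds ((Ultrafilter.of l).map f)
      (le_principal_iff.2 univ_mem)
    have hf : Tendsto f (Ultrafilter.of l) (𝓝 z) := hz
    have hfg' : Tendsto (fun i => (f i, g i)) (Ultrafilter.of l) (𝓤 X) :=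
      hfg.mono_left (Ultrafilter.of_le l)
    exact ⟨z, Ultrafilter.of l, inferInstance, hf, hf.congr_uniformity hfg'⟩

namespace IsIdealOn

variable {S : Type*} {I : Set (Set S)}

theorem empty_mem (hI : IsIdealOn I) : ∅ ∈ I :=
  let ⟨A, hA⟩ := hI.1
  hI.2.1 A hA ∅ (empty_subset A)

theorem ne_univ_iff (hI : IsIdealOn I) : I ≠ univ ↔ univ ∉ I := by
  refine ⟨fun hne huniv => hne (eq_univ_of_forall fun A => hI.2.1 _ huniv A (subset_univ A)), ?_⟩
  rintro huniv rfl
  exact huniv (mem_univ _)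

def toFilter (hI : IsIdealOn I) : Filter S :=
  comk (· ∈ I) hI.empty_mem hI.2.1 hI.2.2

theorem mem_toFilter (hI : IsIdealOn I) {A : Set S} : A ∈ hI.toFilter ↔ Aᶜ ∈ I :=
  mem_comk

theorem toFilter_neBot (hI : IsIdealOn I) (huniv : univ ∉ I) : hI.toFilter.NeBot :=
  ⟨fun h => huniv (by simpa using hI.mem_toFilter.1 (h ▸ mem_bot : ∅ ∈ hI.toFilter))⟩

end IsIdealOn

theorem isIdealOn_compl_mem {S : Type*} (l : Filter S) : IsIdealOn {A : Set S | Aᶜ ∈ l} :=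
  ⟨⟨∅, by simp⟩, fun _ hA _ hBA => mem_of_superset hA (compl_subset_compl.2 hBA),
    fun _ hA _ hB => by simpa only [mem_ofPred_eq, compl_union] using inter_mem hA hB⟩

theorem asymMod_iff_tendsto_uniformity {S X : Type*} [UniformSpace X] [SMul S X]
    {I : Set (Set S)} {l : Filter S} (hlI : ∀ A, A ∈ l ↔ Aᶜ ∈ I) (x y : X) :
    AsymMod S X I x y ↔ Tendsto (fun s : S => (s • x, s • y)) l (𝓤 X) := by
  refine forall₂_congr fun α _ => ?_
  rw [mem_map, hlI]
  rfl

theorem stmt6_general {S X : Type*} [Monoid S]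
    [UniformSpace X] [CompactSpace X] [MulAction S X]
    (x y : X) :
    ProxPair S X x y ↔
      ∃ I : Set (Set S), IsIdealOn I ∧ I ≠ Set.univ ∧ AsymMod S X I x y := by
  rw [ProxPair, exists_common_limit_iff_exists_tendsto_uniformity]
  constructor
  · rintro ⟨l, hl, hxy⟩
    have hI := isIdealOn_compl_mem l
    exact ⟨_, hI, hI.ne_univ_iff.2 (by simp),
      (asymMod_iff_tendsto_uniformity (fun A => by simp) x y).2 hxy⟩
  · rintro ⟨I, hI, hne, hxy⟩
    exact ⟨hI.toFilter, hI.toFilter_neBot (hI.ne_univ_iff.1 hne),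
      (asymMod_iff_tendsto_uniformity (fun _ => hI.mem_toFilter) x y).1 hxy⟩

/-- In a transformation semigroup `(X,S)` with `card S ≥ 2`, the proximal pairs are exactly
the pairs asymptotic modulo some proper ideal `I ≠ P(S)` on `S`. -/
theorem stmt6 {S X : Type*} [Monoid S] [Nontrivial S]
    [UniformSpace X] [CompactSpace X] [T2Space X] [MulAction S X]
    (hcont : ∀ s : S, Continuous fun x : X => s • x) (x y : X) :
    ProxPair S X x y ↔
      ∃ I : Set (Set S), IsIdealOn I ∧ I ≠ Set.univ ∧ AsymMod S X I x y :=
  stmt6_general x y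
end

section
/- Let F be an infinite Fort space with particular point b. For D ⊆ F let α_D = ((F∖D)×(F∖D)) ∪ Δ_D. Then K = {U ⊆ F×F : ∃ finite D ⊆ F∖{b}, α_D ⊆ U} is a uniform structure on F whose induced topology is the Fort topology. -/
/-!
Each `α_D` is an equivalence relation, with classes `F ∖ D` and the singletons of `D`, so the
`α_D` form a basis of a uniformity. The ball of `α_D` about `b` is `F ∖ D`, so neighbourhoods of `b`
are cofinite; for `x ≠ b`, the ball of `α_{x}` about `x` is `{x}`, so every other point is isolated.
-/

open SetRel Topology UniformSpace

/-- The Fort topology on `F` with particular point `b`: a set is open iff it misses `b`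
or has finite complement. -/
def fortTop (F : Type*) (b : F) : TopologicalSpace F where
  IsOpen U := b ∈ U → (Uᶜ : Set F).Finite
  isOpen_univ := fun _ => by simp
  isOpen_inter := fun U V hU hV h => by
    rw [Set.compl_inter]
    exact (hU h.1).union (hV h.2)
  isOpen_sUnion := fun S hS h => by
    obtain ⟨U, hUS, hbU⟩ := h
    exact (hS U hUS hbU).subset (Set.compl_subset_compl.2 (Set.subset_sUnion_of_mem hUS))

/-- The basic entourage `α_D = ((F∖D) × (F∖D)) ∪ Δ_D` associated to `D ⊆ F`. -/
def fortEntourage (F : Type*) (D : Set F) : Set (F × F) :=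
  (Dᶜ ×ˢ Dᶜ) ∪ {p : F × F | p.1 ∈ D ∧ p.1 = p.2}

section FortEntourage

variable {F : Type*} {D : Set F} {x y : F}

theorem mk_mem_fortEntourage_iff : (x, y) ∈ fortEntourage F D ↔ x = y ∨ x ∉ D ∧ y ∉ D := by
  simp only [fortEntourage, Set.mem_union, Set.mem_prod, Set.mem_compl_iff, Set.mem_ofPred_eq]
  by_cases hx : x ∈ D <;> by_cases hxy : x = y <;> simp_all

theorem fortEntourage_antitone : Antitone (fortEntourage F) := by
  intro D E hDE ⟨x, y⟩
  simp only [mk_mem_fortEntourage_iff]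
  exact Or.imp_right fun h => ⟨fun hx => h.1 (hDE hx), fun hy => h.2 (hDE hy)⟩

theorem refl_mem_fortEntourage (D : Set F) (x : F) : (x, x) ∈ fortEntourage F D :=
  mk_mem_fortEntourage_iff.2 (Or.inl rfl)

theorem swap_mem_fortEntourage (h : (x, y) ∈ fortEntourage F D) :
    (y, x) ∈ fortEntourage F D := by
  rw [mk_mem_fortEntourage_iff] at h ⊢
  exact h.imp Eq.symm And.symm

theorem fortEntourage_comp_subset (D : Set F) :
    fortEntourage F D ○ fortEntourage F D ⊆ fortEntourage F D := by
  rintro ⟨x, z⟩ ⟨y, hxy, hyz⟩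
  rw [mk_mem_fortEntourage_iff] at hxy hyz ⊢
  rcases hxy with rfl | ⟨hx, hy⟩
  · exact hyz
  · rcases hyz with rfl | ⟨-, hz⟩
    · exact Or.inr ⟨hx, hy⟩
    · exact Or.inr ⟨hx, hz⟩

theorem ball_fortEntourage_of_mem (hx : x ∈ D) : ball x (fortEntourage F D) = {x} := by
  ext y
  simp [ball, mk_mem_fortEntourage_iff, hx, eq_comm]

theorem ball_fortEntourage_of_notMem (hx : x ∉ D) : ball x (fortEntourage F D) = Dᶜ := by
  ext y
  simp only [ball, Set.mem_preimage, mk_mem_fortEntourage_iff, hx, not_false_eq_true,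
    true_and, Set.mem_compl_iff]
  exact ⟨fun h => h.elim (fun hxy => hxy ▸ hx) id, Or.inr⟩

end FortEntourage

section FortUniformity

variable {F : Type*} (b : F)

def fortUniformity : Filter (F × F) where
  sets := {U | ∃ D : Set F, D.Finite ∧ b ∉ D ∧ fortEntourage F D ⊆ U}
  univ_sets := ⟨∅, Set.finite_empty, Set.notMem_empty b, Set.subset_univ _⟩
  sets_of_superset := fun ⟨D, hD, hbD, hDU⟩ hUV => ⟨D, hD, hbD, hDU.trans hUV⟩
  inter_sets := fun ⟨D, hD, hbD, hDU⟩ ⟨E, hE, hbE, hEV⟩ =>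
    ⟨D ∪ E, hD.union hE, fun h => h.elim hbD hbE,
      Set.subset_inter (fortEntourage_antitone Set.subset_union_left |>.trans hDU)
        (fortEntourage_antitone Set.subset_union_right |>.trans hEV)⟩

variable {b} in
theorem mem_fortUniformity {U : Set (F × F)} :
    U ∈ fortUniformity b ↔ ∃ D : Set F, D.Finite ∧ b ∉ D ∧ fortEntourage F D ⊆ U :=
  Iff.rfl

def fortUniformSpace : UniformSpace F :=
  .ofCore <| .mk' (fortUniformity b)
    (fun _ hU x =>
      let ⟨D, _, _, hDU⟩ := mem_fortUniformity.1 hU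
      hDU (refl_mem_fortEntourage D x))
    (fun _ hU =>
      let ⟨D, hD, hbD, hDU⟩ := mem_fortUniformity.1 hU
      ⟨D, hD, hbD, fun _ hp => hDU (swap_mem_fortEntourage hp)⟩)
    (fun _ hU =>
      let ⟨D, hD, hbD, hDU⟩ := mem_fortUniformity.1 hU
      ⟨fortEntourage F D, ⟨D, hD, hbD, subset_rfl⟩, (fortEntourage_comp_subset D).trans hDU⟩)

theorem isOpen_fortUniformSpace_iff {s : Set F} :
    IsOpen[(fortUniformSpace b).toTopologicalSpace] s ↔
      ∀ x ∈ s, ∃ D : Set F, D.Finite ∧ b ∉ D ∧ ball x (fortEntourage F D) ⊆ s := by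
  let := fortUniformSpace b
  rw [isOpen_iff_ball_subset]
  refine forall₂_congr fun x _ => ⟨?_, ?_⟩
  · rintro ⟨U, ⟨D, hD, hbD, hDU⟩, hUs⟩
    exact ⟨D, hD, hbD, (ball_mono hDU x).trans hUs⟩
  · rintro ⟨D, hD, hbD, hDs⟩
    exact ⟨fortEntourage F D, ⟨D, hD, hbD, subset_rfl⟩, hDs⟩

theorem fortUniformSpace_toTopologicalSpace :
    (fortUniformSpace b).toTopologicalSpace = fortTop F b := by
  ext s
  rw [isOpen_fortUniformSpace_iff]
  change _ ↔ (b ∈ s → sᶜ.Finite)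
  constructor
  · intro h hbs
    obtain ⟨D, hD, hbD, hDs⟩ := h b hbs
    rw [ball_fortEntourage_of_notMem hbD] at hDs
    exact hD.subset (Set.compl_subset_comm.1 hDs)
  · intro h x hxs
    by_cases hxb : x = b
    · subst hxb
      refine ⟨sᶜ, h hxs, not_not_intro hxs, ?_⟩
      rw [ball_fortEntourage_of_notMem (not_not_intro hxs), compl_compl]
    · refine ⟨{x}, Set.finite_singleton x, Ne.symm hxb, ?_⟩
      rw [ball_fortEntourage_of_mem (Set.mem_singleton x)]
      exact Set.singleton_subset_iff.2 hxs

end FortUniformity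

theorem stmt8_general {F : Type*} (b : F) :
    ∃ u : UniformSpace F,
      u.uniformity.sets =
        {U : Set (F × F) | ∃ D : Set F, D.Finite ∧ b ∉ D ∧ fortEntourage F D ⊆ U} ∧
      u.toTopologicalSpace = fortTop F b :=
  ⟨fortUniformSpace b, rfl, fortUniformSpace_toTopologicalSpace b⟩

/-- For an infinite Fort space `F` with particular point `b`, the collection
`K = {U ⊆ F×F : ∃ finite D ⊆ F∖{b}, α_D ⊆ U}` is a uniform structure on `F` whose induced
topology is the Fort topology. -/
theorem stmt8 {F : Type*} (b : F) (hF : Infinite F) :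
    ∃ u : UniformSpace F,
      u.uniformity.sets =
        {U : Set (F × F) | ∃ D : Set F, D.Finite ∧ b ∉ D ∧ fortEntourage F D ⊆ U} ∧
      u.toTopologicalSpace = fortTop F b :=
  stmt8_general b
end

section
/- In an infinite Fort transformation group (F,G), if x ≠ b has finite orbit xG and (x,y) is proximal, then x = y. -/
/-!
A finite orbit missing the particular point is closed (Fort spaces are T1) and consists of
isolated points. So the common limit `z` of `g • x` and `g • y` lies in the orbit and, being
isolated, is attained: `g • x = z = g • y` for some `g`, whence `x = y`.
-/

open Filter Topology MulAction

theorem isOpen_singleton_fortTop {F : Type*} {b z : F} (hz : z ≠ b) :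
    IsOpen[fortTop F b] {z} :=
  fun hb => absurd (Set.mem_singleton_iff.mp hb).symm hz

theorem t1Space_fortTop (F : Type*) (b : F) : @T1Space F (fortTop F b) := by
  let := fortTop F b
  exact ⟨fun x => ⟨fun _ => by simpa only [compl_compl] using Set.finite_singleton x⟩⟩

theorem smul_ne_of_forall_smul_eq {G X : Type*} [Group G] [MulAction G X] {b x : X}
    (hb : ∀ g : G, g • b = b) (hx : x ≠ b) (g : G) : g • x ≠ b :=
  fun h => hx (smul_left_cancel g (h.trans (hb g).symm))

theorem ProxPair.eq_of_isClosed_orbit_of_isOpen_singleton {G X : Type*} [Group G]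
    [MulAction G X] [TopologicalSpace X] {x y : X} (h : ProxPair G X x y)
    (hclosed : IsClosed (orbit G x)) (hdiscrete : ∀ z ∈ orbit G x, IsOpen {z}) : x = y := by
  obtain ⟨z, l, hl, hzx, hzy⟩ := h
  have hz : z ∈ orbit G x :=
    hclosed.closure_subset (mem_closure_of_tendsto hzx (.of_forall (mem_orbit x)))
  have hnhds : 𝓝 z = pure z := (isOpen_singleton_iff_nhds_eq_pure z).mp (hdiscrete z hz)
  rw [hnhds, tendsto_pure] at hzx hzy
  obtain ⟨g, hgx, hgy⟩ := (hzx.and hzy).exists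
  exact smul_left_cancel g (hgx.trans hgy.symm)

theorem stmt10_general {F G : Type*} [Group G] [MulAction G F] (b : F)
    (hb : ∀ g : G, g • b = b)
    (x y : F) (hx : x ≠ b) (horb : (MulAction.orbit G x).Finite)
    (h : @ProxPair G F (fortTop F b) _ x y) : x = y := by
  let := fortTop F b
  have := t1Space_fortTop F b
  refine h.eq_of_isClosed_orbit_of_isOpen_singleton horb.isClosed ?_
  rintro _ ⟨g, rfl⟩
  exact isOpen_singleton_fortTop (smul_ne_of_forall_smul_eq hb hx g)

/-- In an infinite Fort transformation group `(F,G)`, if `x ≠ b` has finite orbit and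
`(x,y)` is proximal, then `x = y`. -/
theorem stmt10 {F G : Type*} [Group G] [MulAction G F] (b : F) (hF : Infinite F)
    (hb : ∀ g : G, g • b = b)
    (hcont : ∀ g : G, @Continuous F F (fortTop F b) (fortTop F b) fun x => g • x)
    (x y : F) (hx : x ≠ b) (horb : (MulAction.orbit G x).Finite)
    (h : @ProxPair G F (fortTop F b) _ x y) : x = y :=
  stmt10_general b hb x y hx horb h
end

section
/- In an infinite Fort transformation group (F,G) with G abelian, if x,y ∈ F both have infinite orbits then (x,y) is proximal. -/
/-!
Since `g • x ∈ A` for a finite set `A` confines `g` to finitely many cosets of the stabilizer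
of `x`, and a group is never a finite union of cosets of infinite-index subgroups
(B. H. Neumann), two points with infinite orbits can be pushed off any finite set by one
`g`. Hence there is a nontrivial filter along which both `g • x` and `g • y` tend to the
cofinite filter, which in the Fort topology converges to the particular point.
-/

open Filter Set MulAction Pointwise

theorem cofinite_le_nhds_fortTop {F : Type*} (b : F) :
    (cofinite : Filter F) ≤ @nhds F (fortTop F b) b := by
  let := fortTop F b
  intro U hU
  obtain ⟨V, hVU, hV, hbV⟩ := mem_nhds_iff.1 hU
  exact (hV hbV).subset (compl_subset_compl.2 hVU)

section

variable {G α : Type*} [Group G] [MulAction G α]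

theorem mem_invFun_smul_stabilizer (g : G) (x : α) :
    g ∈ Function.invFun (fun h : G => h • x) (g • x) • (stabilizer G x : Set G) := by
  have hrep : Function.invFun (fun h : G => h • x) (g • x) • x = g • x :=
    Function.invFun_eq (f := fun h : G => h • x) ⟨g, rfl⟩
  rw [mem_leftCoset_iff, SetLike.mem_coe, mem_stabilizer_iff, mul_smul, inv_smul_eq_iff, hrep]

theorem finite_orbit_of_finiteIndex_stabilizer {x : α} (h : (stabilizer G x).FiniteIndex) :
    (orbit G x).Finite :=
  Set.finite_of_ncard_ne_zero (index_stabilizer G x ▸ h.index_ne_zero)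

theorem exists_smul_notMem_of_orbit_infinite {ι : Type*} [Finite ι] {x : ι → α}
    (hx : ∀ i, (orbit G (x i)).Infinite) {A : Set α} (hA : A.Finite) :
    ∃ g : G, ∀ i, g • x i ∉ A := by
  classical
  have := Fintype.ofFinite ι
  by_contra! hcover
  have hcovers : ⋃ p ∈ (Finset.univ ×ˢ hA.toFinset : Finset (ι × α)),
      Function.invFun (fun h : G => h • x p.1) p.2 • (stabilizer G (x p.1) : Set G) = univ := by
    refine eq_univ_of_forall fun g => ?_
    obtain ⟨i, hi⟩ := hcover g
    exact mem_biUnion (x := (i, g • x i)) (by simpa using hi) (mem_invFun_smul_stabilizer g (x i))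
  obtain ⟨p, -, hp⟩ := Subgroup.exists_finiteIndex_of_leftCoset_cover hcovers
  exact hx p.1 (finite_orbit_of_finiteIndex_stabilizer hp)

theorem exists_neBot_tendsto_smul_cofinite {ι : Type*} [Finite ι] {x : ι → α}
    (hx : ∀ i, (orbit G (x i)).Infinite) :
    ∃ l : Filter G, l.NeBot ∧ ∀ i, Tendsto (fun g : G => g • x i) l cofinite := by
  refine ⟨comap (fun g i => g • x i) (pi fun _ => cofinite), comap_neBot_iff.2 fun s hs => ?_,
    tendsto_pi.1 tendsto_comap⟩
  obtain ⟨I, -, t, ht, hts⟩ := mem_pi.1 hs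
  have hA : (⋃ i, (t i)ᶜ).Finite := finite_iUnion ht
  obtain ⟨g, hg⟩ := exists_smul_notMem_of_orbit_infinite hx hA
  exact ⟨g, hts fun i _ => not_not.1 fun h => hg i (mem_iUnion.2 ⟨i, h⟩)⟩

end

theorem stmt11_general {F G : Type*} [CommGroup G] [MulAction G F] (b : F)
    (x y : F) (hx : (MulAction.orbit G x).Infinite) (hy : (MulAction.orbit G y).Infinite) :
    @ProxPair G F (fortTop F b) _ x y := by
  obtain ⟨l, hl, hlim⟩ :=
    exists_neBot_tendsto_smul_cofinite (G := G) (x := ![x, y]) (Fin.forall_fin_two.2 ⟨hx, hy⟩)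
  exact ⟨b, l, hl, (hlim 0).mono_right (cofinite_le_nhds_fortTop b),
    (hlim 1).mono_right (cofinite_le_nhds_fortTop b)⟩

/-- In an infinite Fort transformation group `(F,G)` with `G` abelian, any two points with
infinite orbits are proximal. -/
theorem stmt11 {F G : Type*} [CommGroup G] [MulAction G F] (b : F) (hF : Infinite F)
    (hb : ∀ g : G, g • b = b)
    (hcont : ∀ g : G, @Continuous F F (fortTop F b) (fortTop F b) fun x => g • x)
    (x y : F) (hx : (MulAction.orbit G x).Infinite) (hy : (MulAction.orbit G y).Infinite) :
    @ProxPair G F (fortTop F b) _ x y :=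
  stmt11_general b x y hx hy
end

section
/- An abelian infinite Fort transformation group (F,G) is Li–Yorke chaotic if and only if the set H = {x ∈ F : xG is infinite and st(x) is infinite} is uncountable. -/
open Pointwise

/-- Asymptoticity modulo an ideal `I` in a Fort transformation group `(F,G)`, expressed via
the generating entourages `α_D` (finite `D ⊆ F∖{b}`) of the unique uniformity of the Fort
space `F` with particular point `b`. -/
def FortAsymMod (G F : Type*) [SMul G F] (b : F) (I : Set (Set G)) (x y : F) : Prop :=
  ∀ D : Set F, D.Finite → b ∉ D → {g : G | (g • x, g • y) ∉ fortEntourage F D} ∈ I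

/-!
Every point of the Fort space other than `b` is isolated, and the neighbourhoods of `b` are the
cofinite sets containing `b`. Hence two distinct points can only be proximal with common limit
`b`, which a point of finite orbit other than `b` never approaches. Conversely, two points with
infinite orbits are proximal: by B. H. Neumann's lemma the group is not a finite union of cosets
of their stabilizers, so some `g` moves both of them off any given finite set. Testing
asymptoticity against the entourage of `D = {x}` shows that a point with infinite stabilizer is
non-asymptotic to every other point, while two points with finite stabilizers are asymptotic.
So a scrambled set lies in `H` (`infiniteOrbitStabilizerSet`) up to two points, and `H` itself
is scrambled.
-/

namespace MulAction

variable {G X : Type*} [Group G] [MulAction G X]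

theorem not_finiteIndex_stabilizer_of_orbit_infinite {x : X} (hx : (orbit G x).Infinite) :
    ¬ (stabilizer G x).FiniteIndex := fun h =>
  h.index_ne_zero ((index_stabilizer G x).trans hx.ncard)

theorem exists_finset_forall_smul_mem {K : Set X} (hK : K.Finite) (x : X) :
    ∃ T : Finset G, ∀ g : G, g • x ∈ K → ∃ t ∈ T, g ∈ t • (stabilizer G x : Set G) := by
  classical
  choose! t ht using fun d (hd : d ∈ orbit G x) => mem_orbit_iff.1 hd
  refine ⟨hK.toFinset.image t, fun g hg =>
    ⟨t (g • x), Finset.mem_image_of_mem _ (hK.mem_toFinset.2 hg), ?_⟩⟩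
  rw [Set.mem_smul_set_iff_inv_smul_mem, smul_eq_mul, SetLike.mem_coe, mem_stabilizer_iff,
    mul_smul, inv_smul_eq_iff, ht _ (mem_orbit x g)]

theorem finite_setOf_smul_mem {K : Set X} (hK : K.Finite) {x : X}
    (hx : (stabilizer G x : Set G).Finite) : {g : G | g • x ∈ K}.Finite := by
  obtain ⟨T, hT⟩ := exists_finset_forall_smul_mem (G := G) hK x
  refine (T.finite_toSet.biUnion fun t _ => hx.smul_set (a := t)).subset fun g hg => ?_
  obtain ⟨t, ht, hgt⟩ := hT g hg
  exact Set.mem_biUnion ht hgt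

theorem exists_smul_notMem_of_orbit_infinite {x y : X} (hx : (orbit G x).Infinite)
    (hy : (orbit G y).Infinite) {K : Set X} (hK : K.Finite) :
    ∃ g : G, g • x ∉ K ∧ g • y ∉ K := by
  classical
  by_contra! hcover
  obtain ⟨Tx, hTx⟩ := exists_finset_forall_smul_mem (G := G) hK x
  obtain ⟨Ty, hTy⟩ := exists_finset_forall_smul_mem (G := G) hK y
  have hcosets : ⋃ i ∈ (Tx ∪ Ty) ×ˢ (Finset.univ : Finset Bool),
      i.1 • (stabilizer G (cond i.2 x y) : Set G) = Set.univ := by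
    refine Set.eq_univ_of_forall fun g => Set.mem_iUnion₂.2 ?_
    by_cases hgx : g • x ∈ K
    · obtain ⟨t, ht, hgt⟩ := hTx g hgx
      exact ⟨(t, true), by simp [ht], hgt⟩
    · obtain ⟨t, ht, hgt⟩ := hTy g (hcover g hgx)
      exact ⟨(t, false), by simp [ht], hgt⟩
  obtain ⟨⟨t, _ | _⟩, -, hfin⟩ := Subgroup.exists_finiteIndex_of_leftCoset_cover hcosets
  · exact not_finiteIndex_stabilizer_of_orbit_infinite hy hfin
  · exact not_finiteIndex_stabilizer_of_orbit_infinite hx hfin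

end MulAction

open Filter MulAction

section FortTopology

variable {F : Type*} (b : F)

theorem fortTop_nhds_eq_pure {z : F} (hz : z ≠ b) : @nhds F (fortTop F b) z = pure z := by
  let := fortTop F b
  exact le_antisymm (le_pure_iff.2 (IsOpen.mem_nhds (fun hb => absurd hb hz.symm) rfl))
    (pure_le_nhds z)

theorem fortTop_nhds_eq_sup_cofinite : @nhds F (fortTop F b) b = pure b ⊔ cofinite := by
  let := fortTop F b
  ext U
  rw [mem_sup, mem_pure, mem_cofinite, mem_nhds_iff]
  constructor
  · rintro ⟨V, hVU, hV, hbV⟩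
    exact ⟨hVU hbV, (hV hbV).subset (Set.compl_subset_compl.2 hVU)⟩
  · rintro ⟨hbU, hU⟩
    exact ⟨U, subset_rfl, fun _ => hU, hbU⟩

end FortTopology

section FortDynamics

variable {G F : Type*} [Group G] [MulAction G F] {b : F}

theorem ProxPair.fortTop_tendsto_particular {x y : F} (hxy : x ≠ y)
    (h : @ProxPair G F (fortTop F b) _ x y) :
    ∃ l : Filter G, l.NeBot ∧ Tendsto (· • x) l (@nhds F (fortTop F b) b) := by
  obtain ⟨z, l, hl, hx, hy⟩ := h
  obtain rfl : z = b := by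
    by_contra hzb
    rw [fortTop_nhds_eq_pure b hzb, tendsto_pure] at hx hy
    obtain ⟨g, hgx, hgy⟩ := (hx.and hy).exists
    exact hxy (smul_left_cancel g (hgx.trans hgy.symm))
  exact ⟨l, hl, hx⟩

theorem eq_of_tendsto_smul_particular (hb : ∀ g : G, g • b = b) {x : F}
    (hx : (orbit G x).Finite) {l : Filter G} [l.NeBot]
    (hl : Tendsto (· • x) l (@nhds F (fortTop F b) b)) : x = b := by
  have hU : (orbit G x \ {b})ᶜ ∈ @nhds F (fortTop F b) b := by
    rw [fortTop_nhds_eq_sup_cofinite, mem_sup, mem_cofinite, compl_compl]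
    exact ⟨fun h => h.2 rfl, hx.sdiff⟩
  obtain ⟨g, hg⟩ := nonempty_of_mem (tendsto_def.1 hl _ hU)
  have hgx : g • x = b := by_contra fun hne => hg ⟨mem_orbit x g, hne⟩
  rw [← inv_smul_smul g x, hgx, hb]

theorem proxPair_of_orbit_infinite (b : F) {x y : F} (hx : (orbit G x).Infinite)
    (hy : (orbit G y).Infinite) : @ProxPair G F (fortTop F b) _ x y := by
  let l : Filter G := comap (· • x) cofinite ⊓ comap (· • y) cofinite
  have hl : l.NeBot := by
    refine forall_mem_nonempty_iff_neBot.1 fun s hs => ?_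
    obtain ⟨_, ⟨A, hA, hAx⟩, _, ⟨B, hB, hBy⟩, rfl⟩ := mem_inf_iff.1 hs
    obtain ⟨g, hgx, hgy⟩ := exists_smul_notMem_of_orbit_infinite hx hy (hA.union hB)
    exact ⟨g, hAx (not_not.1 fun h => hgx (Or.inl h)), hBy (not_not.1 fun h => hgy (Or.inr h))⟩
  have hcofinite : cofinite ≤ @nhds F (fortTop F b) b := by
    rw [fortTop_nhds_eq_sup_cofinite]
    exact le_sup_right
  exact ⟨b, l, hl, (tendsto_comap.mono_left inf_le_left).mono_right hcofinite,
    (tendsto_comap.mono_left inf_le_right).mono_right hcofinite⟩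

theorem fortAsymMod_of_stabilizer_finite (b : F) {x y : F} (hx : (stabilizer G x : Set G).Finite)
    (hy : (stabilizer G y : Set G).Finite) : FortAsymMod G F b {A | A.Finite} x y := by
  intro D hD _
  refine ((finite_setOf_smul_mem hD hx).union (finite_setOf_smul_mem hD hy)).subset
    fun g hg => ?_
  by_contra hgD
  exact hg (Or.inl ⟨fun h => hgD (Or.inl h), fun h => hgD (Or.inr h)⟩)

theorem not_fortAsymMod_of_stabilizer_infinite {x y : F} (hxb : x ≠ b) (hxy : x ≠ y)
    (hx : (stabilizer G x : Set G).Infinite) : ¬ FortAsymMod G F b {A | A.Finite} x y := by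
  intro h
  refine hx ((h {x} (Set.finite_singleton x) fun hb => hxb hb.symm).subset fun g hg => ?_)
  rintro (⟨hgx, -⟩ | ⟨-, hgxy⟩)
  · exact hgx (Set.mem_singleton_iff.2 hg)
  · exact hxy (smul_left_cancel g hgxy)

end FortDynamics

section LiYorke

variable (G : Type*) {F : Type*} [Group G] [MulAction G F]

def IsLiYorkeScrambled (b : F) (S : Set F) : Prop :=
  ∀ x ∈ S, ∀ y ∈ S, x ≠ y →
    @ProxPair G F (fortTop F b) _ x y ∧ ¬ FortAsymMod G F b {A : Set G | A.Finite} x y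

variable (F) in
def infiniteOrbitStabilizerSet : Set F :=
  {x | (orbit G x).Infinite ∧ (stabilizer G x : Set G).Infinite}

variable {G} {b : F}

theorem IsLiYorkeScrambled.countable (hb : ∀ g : G, g • b = b) {S : Set F}
    (hS : IsLiYorkeScrambled G b S) (hH : (infiniteOrbitStabilizerSet G F).Countable) :
    S.Countable := by
  rcases S.subsingleton_or_nontrivial with hS1 | hS1
  · exact hS1.countable
  have hfin : {x ∈ S | (stabilizer G x : Set G).Finite}.Subsingleton := fun x hx y hy =>
    by_contra fun hxy => (hS x hx.1 y hy.1 hxy).2 (fortAsymMod_of_stabilizer_finite b hx.2 hy.2)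
  refine (hH.union ((Set.countable_singleton b).union hfin.countable)).mono fun x hxS => ?_
  by_cases hst : (stabilizer G x : Set G).Finite
  · exact Or.inr (Or.inr ⟨hxS, hst⟩)
  by_cases horb : (orbit G x).Infinite
  · exact Or.inl ⟨horb, hst⟩
  obtain ⟨y, hyS, hyx⟩ := hS1.exists_ne x
  obtain ⟨l, hl, hlim⟩ := (hS x hxS y hyS hyx.symm).1.fortTop_tendsto_particular hyx.symm
  exact Or.inr (Or.inl (eq_of_tendsto_smul_particular hb (Set.not_infinite.1 horb) hlim))

theorem isLiYorkeScrambled_infiniteOrbitStabilizerSet (hb : ∀ g : G, g • b = b) :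
    IsLiYorkeScrambled G b (infiniteOrbitStabilizerSet G F) := by
  intro x hx y hy hxy
  have hxb : x ≠ b := by
    rintro rfl
    exact hx.1 ((Set.finite_singleton x).subset (by rintro _ ⟨g, rfl⟩; exact hb g))
  exact ⟨proxPair_of_orbit_infinite b hx.1 hy.1,
    not_fortAsymMod_of_stabilizer_infinite hxb hxy hx.2⟩

end LiYorke

theorem stmt17_general {F G : Type*} [CommGroup G] [MulAction G F] (b : F)
    (hb : ∀ g : G, g • b = b) :
    (∃ D : Set F, ¬ D.Countable ∧ ∀ x ∈ D, ∀ y ∈ D, x ≠ y →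
        @ProxPair G F (fortTop F b) _ x y ∧
        ¬ FortAsymMod G F b {A : Set G | A.Finite} x y) ↔
    ¬ {x : F | (MulAction.orbit G x).Infinite ∧
        (MulAction.stabilizer G x : Set G).Infinite}.Countable := by
  constructor
  · rintro ⟨S, hSunc, hS⟩ hH
    exact hSunc (IsLiYorkeScrambled.countable hb hS hH)
  · exact fun hH => ⟨_, hH, isLiYorkeScrambled_infiniteOrbitStabilizerSet hb⟩

/-- An abelian infinite Fort transformation group `(F,G)` is Li–Yorke chaotic (i.e. it has an
uncountable set all of whose distinct pairs are proximal and non-asymptotic modulo the ideal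
of finite subsets of `G`) iff `H = {x : xG and st(x) are infinite}` is uncountable. -/
theorem stmt17 {F G : Type*} [CommGroup G] [MulAction G F] (b : F) (hF : Infinite F)
    (hb : ∀ g : G, g • b = b)
    (hcont : ∀ g : G, @Continuous F F (fortTop F b) (fortTop F b) fun x => g • x) :
    (∃ D : Set F, ¬ D.Countable ∧ ∀ x ∈ D, ∀ y ∈ D, x ≠ y →
        @ProxPair G F (fortTop F b) _ x y ∧
        ¬ FortAsymMod G F b {A : Set G | A.Finite} x y) ↔
    ¬ {x : F | (MulAction.orbit G x).Infinite ∧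
        (MulAction.stabilizer G x : Set G).Infinite}.Countable :=
  stmt17_general b hb
end

section
/- Let G = Z × R act on F = R ∪ {∞} (the Fort space with particular point ∞, i.e., the one-point compactification of discrete R) by ∞·(n,r) = ∞ and x·(n,r) = x + r for x ∈ R. Then for every x ∈ R, the orbit xG equals R and the stabilizer st(x) equals Z × {0}; consequently (F,G) is Li–Yorke chaotic but is not Li–Yorke chaotic modulo the ideal P_count(G) of countable subsets of G. -/
open Pointwise

/-- The group `G = ℤ × ℝ` (written multiplicatively) acting on `F = ℝ ∪ {∞}` by
`∞·(n,r) = ∞` and `x·(n,r) = x + r`. -/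
instance : SMul (Multiplicative (ℤ × ℝ)) (Option ℝ) :=
  ⟨fun g x => x.map fun r => r + (Multiplicative.toAdd g).2⟩

instance : MulAction (Multiplicative (ℤ × ℝ)) (Option ℝ) where
  one_smul x := by
    cases x <;> simp [HSMul.hSMul, SMul.smul]
  mul_smul g h x := by
    cases x <;> simp [HSMul.hSMul, SMul.smul] <;> ring

/-!
In a Fort space with particular point `b`, every cofinite filter converges to `b`, so translating
two reals to `+∞` drives both to `∞`: all pairs are proximal. Whether a pair is asymptotic modulo an
ideal is governed by stabilizers. The times `g` at which `x·g` meets a finite set `D ∌ b` form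
finitely many cosets of `st(x)`, hence a countable set since `st(x) = ℤ × {0}`, so every pair is
asymptotic modulo countable sets. Yet for `g ∈ st(x)` the pair `(x·g, y·g) = (x, y·g)` leaves
`α_{x}`, and `st(x)` is infinite, so distinct reals are never asymptotic modulo finite sets.
-/

open Filter MulAction

section FortSpace

variable {F : Type*}

theorem fortTop_cofinite_le_nhds (b : F) :
    (cofinite : Filter F) ≤ @nhds F (fortTop F b) b := by
  let _ := fortTop F b
  intro U hU
  obtain ⟨t, htU, ht, hbt⟩ := mem_nhds_iff.1 hU
  exact (ht hbt).subset (Set.compl_subset_compl.2 htU)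

variable {G : Type*}

theorem setOf_smul_notMem_fortEntourage_subset [SMul G F] (D : Set F) (x y : F) :
    {g : G | (g • x, g • y) ∉ fortEntourage F D} ⊆ {g | g • x ∈ D} ∪ {g | g • y ∈ D} := by
  intro g hg
  by_contra h
  simp only [Set.mem_union, Set.mem_ofPred_eq, not_or] at h
  exact hg (Or.inl h)

variable [Group G] [MulAction G F]

theorem countable_setOf_smul_eq {x : F} (hx : (stabilizer G x : Set G).Countable) (y : F) :
    {g : G | g • x = y}.Countable := by
  rcases Set.eq_empty_or_nonempty {g : G | g • x = y} with h | ⟨g₀, hg₀⟩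
  · simp [h]
  refine (hx.image (g₀ * ·)).mono fun g (hg : g • x = y) =>
    (Set.mem_image _ _ _).2 ⟨g₀⁻¹ * g, ?_, by simp⟩
  rw [SetLike.mem_coe, mem_stabilizer_iff, mul_smul, hg, ← hg₀, inv_smul_smul]

theorem fortAsymMod_countable {b : F} (hb : ∀ g : G, g • b = b)
    (hst : ∀ x, x ≠ b → (stabilizer G x : Set G).Countable) (x y : F) :
    FortAsymMod G F b {A | A.Countable} x y := by
  intro D hD hbD
  have hmeets : ∀ z : F, {g : G | g • z ∈ D}.Countable := by
    intro z
    rcases eq_or_ne z b with rfl | hz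
    · simp [hb, hbD]
    have : {g : G | g • z ∈ D} = ⋃ d ∈ D, {g | g • z = d} := by ext; simp
    rw [this]
    exact hD.countable.biUnion fun d _ => countable_setOf_smul_eq (hst z hz) d
  exact ((hmeets x).union (hmeets y)).mono (setOf_smul_notMem_fortEntourage_subset D x y)

theorem not_fortAsymMod_finite {b x y : F} (hxb : x ≠ b) (hxy : x ≠ y)
    (hst : (stabilizer G x : Set G).Infinite) :
    ¬ FortAsymMod G F b {A | A.Finite} x y := by
  intro h
  refine hst ((h {x} (Set.finite_singleton x) (by simpa using hxb.symm)).subset fun g hg => ?_)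
  rw [SetLike.mem_coe, mem_stabilizer_iff] at hg
  rintro (⟨hgx, -⟩ | ⟨-, hxy'⟩)
  · exact hgx (hg.symm ▸ rfl)
  · exact hxy (smul_left_cancel g (hg.symm ▸ hxy'))

end FortSpace

namespace FortTranslation

theorem smul_some (g : Multiplicative (ℤ × ℝ)) (a : ℝ) :
    g • (some a : Option ℝ) = some (a + (Multiplicative.toAdd g).2) := rfl

theorem smul_none (g : Multiplicative (ℤ × ℝ)) : g • (none : Option ℝ) = none := rfl

theorem orbit_some (x : ℝ) :
    orbit (Multiplicative (ℤ × ℝ)) (some x : Option ℝ) = {y : Option ℝ | ∃ r : ℝ, y = some r} := by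
  ext y
  constructor
  · rintro ⟨g, rfl⟩
    exact ⟨_, smul_some g x⟩
  · rintro ⟨r, rfl⟩
    exact ⟨Multiplicative.ofAdd (0, r - x), by simp [smul_some]⟩

theorem stabilizer_some (x : ℝ) :
    (stabilizer (Multiplicative (ℤ × ℝ)) (some x : Option ℝ) : Set (Multiplicative (ℤ × ℝ))) =
      {g | (Multiplicative.toAdd g).2 = 0} := by
  ext g
  simp [smul_some]

theorem stabilizer_some_eq_range (x : ℝ) :
    (stabilizer (Multiplicative (ℤ × ℝ)) (some x : Option ℝ) : Set (Multiplicative (ℤ × ℝ))) =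
      Set.range fun n : ℤ => Multiplicative.ofAdd (n, (0 : ℝ)) := by
  rw [stabilizer_some]
  ext g
  constructor
  · intro hg
    exact ⟨(Multiplicative.toAdd g).1, by ext <;> simp [hg.symm]⟩
  · rintro ⟨n, rfl⟩
    rfl

theorem stabilizer_some_countable (x : ℝ) :
    (stabilizer (Multiplicative (ℤ × ℝ)) (some x : Option ℝ) :
      Set (Multiplicative (ℤ × ℝ))).Countable :=
  stabilizer_some_eq_range x ▸ Set.countable_range _

theorem stabilizer_some_infinite (x : ℝ) :
    (stabilizer (Multiplicative (ℤ × ℝ)) (some x : Option ℝ) :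
      Set (Multiplicative (ℤ × ℝ))).Infinite :=
  stabilizer_some_eq_range x ▸ Set.infinite_range_of_injective fun m n h => by
    simpa using congrArg (fun g => (Multiplicative.toAdd g).1) h

theorem tendsto_translate_atTop (x : Option ℝ) :
    Tendsto (fun r : ℝ => Multiplicative.ofAdd ((0 : ℤ), r) • x) atTop
      (@nhds _ (fortTop (Option ℝ) none) none) := by
  cases x with
  | none => exact @tendsto_const_nhds _ (fortTop (Option ℝ) none) _ _ _
  | some a =>
    refine ((Function.Injective.tendsto_cofinite fun r s h => ?_).mono_left
      atTop_le_cofinite).mono_right (fortTop_cofinite_le_nhds none)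
    simpa [smul_some] using h

theorem proxPair (x y : Option ℝ) :
    @ProxPair (Multiplicative (ℤ × ℝ)) (Option ℝ) (fortTop (Option ℝ) none) _ x y :=
  ⟨none, map (fun r : ℝ => Multiplicative.ofAdd ((0 : ℤ), r)) atTop, map_neBot,
    tendsto_map'_iff.2 (tendsto_translate_atTop x), tendsto_map'_iff.2 (tendsto_translate_atTop y)⟩

theorem not_countable_range_some : ¬ (Set.range (some : ℝ → Option ℝ)).Countable := fun h =>
  Cardinal.not_countable_real <| by
    simpa using h.preimage (Option.some_injective ℝ)

end FortTranslation

open FortTranslation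

/-- For the action of `G = ℤ × ℝ` on the Fort space `F = ℝ ∪ {∞}` with particular point `∞`
by translations in the second coordinate: each orbit of a real point is all of `ℝ`, each
stabilizer is `ℤ × {0}`; consequently `(F,G)` is Li–Yorke chaotic (modulo the ideal of finite
subsets of `G`) but not Li–Yorke chaotic modulo the ideal of countable subsets of `G`. -/
theorem stmt18 :
    (∀ x : ℝ, MulAction.orbit (Multiplicative (ℤ × ℝ)) (some x : Option ℝ) =
      {y : Option ℝ | ∃ r : ℝ, y = some r}) ∧
    (∀ x : ℝ, (MulAction.stabilizer (Multiplicative (ℤ × ℝ)) (some x : Option ℝ) :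
        Set (Multiplicative (ℤ × ℝ))) = {g | (Multiplicative.toAdd g).2 = 0}) ∧
    (∃ D : Set (Option ℝ), ¬ D.Countable ∧ ∀ x ∈ D, ∀ y ∈ D, x ≠ y →
        @ProxPair (Multiplicative (ℤ × ℝ)) (Option ℝ) (fortTop (Option ℝ) none) _ x y ∧
        ¬ FortAsymMod (Multiplicative (ℤ × ℝ)) (Option ℝ) none
            {A : Set (Multiplicative (ℤ × ℝ)) | A.Finite} x y) ∧
    ¬ (∃ D : Set (Option ℝ), ¬ D.Countable ∧ ∀ x ∈ D, ∀ y ∈ D, x ≠ y →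
        @ProxPair (Multiplicative (ℤ × ℝ)) (Option ℝ) (fortTop (Option ℝ) none) _ x y ∧
        ¬ FortAsymMod (Multiplicative (ℤ × ℝ)) (Option ℝ) none
            {A : Set (Multiplicative (ℤ × ℝ)) | A.Countable} x y) := by
  refine ⟨orbit_some, stabilizer_some, ⟨_, not_countable_range_some, ?_⟩, ?_⟩
  · rintro _ ⟨a, rfl⟩ y _ hne
    exact ⟨proxPair _ _, not_fortAsymMod_finite (Option.some_ne_none a) hne
      (stabilizer_some_infinite a)⟩
  · rintro ⟨D, hD, hpairs⟩
    obtain ⟨x, hx, y, hy, hne⟩ := Set.not_subsingleton_iff.1 fun h => hD h.countable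
    refine (hpairs x hx y hy hne).2 (fortAsymMod_countable smul_none (fun z hz => ?_) x y)
    obtain ⟨a, rfl⟩ := Option.ne_none_iff_exists'.1 hz
    exact stabilizer_some_countable a
end

section
/- Every infinite abelian Fort transformation group (F,G) admits a co-decomposition into transformation groups none of which is Li–Yorke chaotic: namely the family of cyclic subgroups {⟨g⟩ : g ∈ G}, and for each g ∈ G the transformation group (F, ⟨g⟩) is not Li–Yorke chaotic. -/
open Pointwise

/-! Away from `b` the Fort topology is discrete, so a proximal pair of distinct points can only
be brought together at `b`, and a point whose `⟨g⟩`-orbit accumulates at `b` either is `b` or has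
an infinite orbit. An infinite orbit of a cyclic group has trivial stabilizer, so it visits each
finite `E ∌ b` only finitely often; hence every pair of points proximal for `⟨g⟩` is asymptotic
modulo the finite sets, and no pair is Li–Yorke. -/

open Filter Topology MulAction

section FortTopology

variable {F : Type*} {b : F}

lemma fortTop_isOpen_singleton {z : F} (hz : z ≠ b) : IsOpen[fortTop F b] {z} :=
  fun hb => absurd (Set.mem_singleton_iff.mp hb).symm hz

lemma fortTop_mem_nhds {U : Set F} (hbU : b ∈ U) (hU : Uᶜ.Finite) :
    U ∈ @nhds F (fortTop F b) b :=
  @IsOpen.mem_nhds F (fortTop F b) b U (fun _ => hU) hbU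

lemma mem_or_mem_of_notMem_fortEntourage {D : Set F} {p : F × F}
    (h : p ∉ fortEntourage F D) : p.1 ∈ D ∨ p.2 ∈ D := by
  by_contra! hp
  exact h (Or.inl ⟨hp.1, hp.2⟩)

end FortTopology

lemma smul_injective_zpowers_of_infinite_orbit {G X : Type*} [Group G] [MulAction G X]
    {g : G} {x : X} (h : (orbit (Subgroup.zpowers g) x).Infinite) :
    Function.Injective fun s : Subgroup.zpowers g => s • x := by
  have hper : Function.minimalPeriod (g • ·) x = 0 := by
    by_contra hne
    have : NeZero (Function.minimalPeriod (g • ·) x) := ⟨hne⟩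
    exact h (Set.finite_coe_iff.mp (Finite.of_equiv _ (orbitZPowersEquiv g x).symm))
  rintro ⟨_, m, rfl⟩ ⟨_, n, rfl⟩ hmn
  have hfix : g ^ (-n + m) • x = x := by
    rw [zpow_add, mul_smul, show g ^ m • x = g ^ n • x from hmn, zpow_neg, inv_smul_smul]
  rw [zpow_smul_eq_iff_minimalPeriod_dvd, hper, Nat.cast_zero, zero_dvd_iff] at hfix
  obtain rfl : m = n := by omega
  rfl

section FortAction

variable {F H : Type*} {b : F} [Group H] [MulAction H F]

lemma fortTop_proxPair_tendsto_particularPoint {x y : F} (hxy : x ≠ y)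
    (h : @ProxPair H F (fortTop F b) _ x y) :
    ∃ l : Filter H, l.NeBot ∧ Tendsto (· • x) l (@nhds F (fortTop F b) b) ∧
      Tendsto (· • y) l (@nhds F (fortTop F b) b) := by
  obtain ⟨z, l, hl, hx, hy⟩ := h
  obtain rfl : z = b := by
    by_contra hz
    have hzz := @IsOpen.mem_nhds F (fortTop F b) z _ (fortTop_isOpen_singleton hz) rfl
    obtain ⟨s, hsx, hsy⟩ := ((hx.eventually_mem hzz).and (hy.eventually_mem hzz)).exists
    exact hxy (smul_left_cancel s ((hsx : s • x = z).trans (hsy : s • y = z).symm))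
  exact ⟨l, hl, hx, hy⟩

lemma fortTop_eq_of_finite_orbit_of_tendsto (hb : ∀ h : H, h • b = b) {l : Filter H} [l.NeBot]
    {u : F} (horb : (orbit H u).Finite) (hu : Tendsto (· • u) l (@nhds F (fortTop F b) b)) :
    u = b := by
  have hnhds : (orbit H u \ {b})ᶜ ∈ @nhds F (fortTop F b) b :=
    fortTop_mem_nhds (fun hb' => hb'.2 rfl) (by rw [compl_compl]; exact horb.sdiff)
  obtain ⟨s, hs⟩ := (hu.eventually_mem hnhds).exists
  have hsu : s • u = b := by
    by_contra hne
    exact hs ⟨mem_orbit u s, hne⟩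
  rw [← inv_smul_smul s u, hsu, hb]

end FortAction

section CyclicFortAction

variable {F G : Type*} {b : F} [Group G] [MulAction G F]

lemma finite_setOf_zpowers_smul_mem_of_tendsto (hb : ∀ g : G, g • b = b) {g : G}
    {l : Filter (Subgroup.zpowers g)} [l.NeBot] {u : F}
    (hu : Tendsto (· • u) l (@nhds F (fortTop F b) b)) {E : Set F} (hE : E.Finite)
    (hbE : b ∉ E) : {s : Subgroup.zpowers g | s • u ∈ E}.Finite := by
  by_cases horb : (orbit (Subgroup.zpowers g) u).Finite
  · obtain rfl :=
      fortTop_eq_of_finite_orbit_of_tendsto (fun s : Subgroup.zpowers g => hb s) horb hu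
    convert Set.finite_empty
    exact Set.eq_empty_of_forall_notMem fun s hs => hbE (hb s ▸ hs)
  · exact hE.preimage (smul_injective_zpowers_of_infinite_orbit horb).injOn

lemma zpowers_fortAsymMod_of_proxPair (hb : ∀ g : G, g • b = b) {g : G} {x y : F}
    (hxy : x ≠ y) (h : @ProxPair (Subgroup.zpowers g) F (fortTop F b) _ x y) :
    FortAsymMod (Subgroup.zpowers g) F b {A | A.Finite} x y := by
  obtain ⟨l, hl, hx, hy⟩ := fortTop_proxPair_tendsto_particularPoint hxy h
  intro E hE hbE
  exact ((finite_setOf_zpowers_smul_mem_of_tendsto hb hx hE hbE).union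
    (finite_setOf_zpowers_smul_mem_of_tendsto hb hy hE hbE)).subset
    fun s hs => mem_or_mem_of_notMem_fortEntourage hs

end CyclicFortAction

lemma Subgroup.closure_iUnion_zpowers (G : Type*) [Group G] :
    closure (⋃ g : G, (zpowers g : Set G)) = ⊤ :=
  eq_top_iff.2 fun g _ => subset_closure (Set.mem_iUnion.2 ⟨g, mem_zpowers g⟩)

theorem stmt19_general {F G : Type*} [CommGroup G] [MulAction G F] (b : F)
    (hb : ∀ g : G, g • b = b) :
    Subgroup.closure (⋃ g : G, (Subgroup.zpowers g : Set G)) = ⊤ ∧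
    ∀ g : G, ¬ ∃ D : Set F, ¬ D.Countable ∧ ∀ x ∈ D, ∀ y ∈ D, x ≠ y →
        @ProxPair ↥(Subgroup.zpowers g) F (fortTop F b) _ x y ∧
        ¬ FortAsymMod ↥(Subgroup.zpowers g) F b
            {A : Set ↥(Subgroup.zpowers g) | A.Finite} x y := by
  refine ⟨Subgroup.closure_iUnion_zpowers G, ?_⟩
  rintro g ⟨D, hD, hpairs⟩
  obtain ⟨x, hx, y, hy, hxy⟩ : D.Nontrivial :=
    Set.not_subsingleton_iff.mp fun hsub => hD hsub.countable
  obtain ⟨hprox, hasym⟩ := hpairs x hx y hy hxy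
  exact hasym (zpowers_fortAsymMod_of_proxPair hb hxy hprox)

/-- Every infinite abelian Fort transformation group `(F,G)` is co-decomposable into
non-Li–Yorke-chaotic transformation groups: the cyclic subgroups `⟨g⟩` (g ∈ G) generate `G`,
and for each `g` the transformation group `(F, ⟨g⟩)` is not Li–Yorke chaotic (it admits no
uncountable set all of whose distinct pairs are proximal and non-asymptotic modulo the ideal
of finite subsets of `⟨g⟩`). -/
theorem stmt19 {F G : Type*} [CommGroup G] [MulAction G F] (b : F) (hF : Infinite F)
    (hb : ∀ g : G, g • b = b)
    (hcont : ∀ g : G, @Continuous F F (fortTop F b) (fortTop F b) fun x => g • x) :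
    Subgroup.closure (⋃ g : G, (Subgroup.zpowers g : Set G)) = ⊤ ∧
    ∀ g : G, ¬ ∃ D : Set F, ¬ D.Countable ∧ ∀ x ∈ D, ∀ y ∈ D, x ≠ y →
        @ProxPair ↥(Subgroup.zpowers g) F (fortTop F b) _ x y ∧
        ¬ FortAsymMod ↥(Subgroup.zpowers g) F b
            {A : Set ↥(Subgroup.zpowers g) | A.Finite} x y :=
  stmt19_general b hb
end
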